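/- arXiv:1211.3141 — 3 statements merged into one kernel-verified Lean document; each statement's English description precedes it below -/
import Mathlib

section
/- For any bipartite density operator ρ_AB on H_A ⊗ H_B, the operator inequality |A| · (I_A ⊗ ρ_B) ≥ ρ_AB holds, where |A| = dim H_A and ρ_B = Tr_A(ρ_AB). -/
/-!
Write `x = ∑ₐ xₐ` with `xₐ = eₐ ⊗ x(a, ·)`. Since `ρ ≥ 0`, the quadratic form `q = ⟨·, ρ ·⟩`
satisfies `q (∑ₐ xₐ) ≤ |A| ∑ₐ q xₐ` (the defect is `½ ∑_{a,a'} q (xₐ - x_{a'})`), and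
`∑ₐ q xₐ ≤ ∑_{a,c} q (e_c ⊗ x(a, ·)) = ⟨x, (I_A ⊗ ρ_B) x⟩`.
-/

open Matrix Kronecker
open scoped ComplexOrder

/-- Hypothesis testing quantity `β_ε(ρ‖σ) = (1/ε) min{Tr(Qσ) : 0 ≤ Q ≤ I, Tr(Qρ) ≥ ε}`. -/
noncomputable def betaHT {ι : Type*} [Fintype ι] [DecidableEq ι]
    (ε : ℝ) (ρ σ : Matrix ι ι ℂ) : ℝ :=
  sInf { r : ℝ | ∃ Q : Matrix ι ι ℂ, Q.PosSemidef ∧ ((1 : Matrix ι ι ℂ) - Q).PosSemidef ∧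
    ε ≤ ((Q * ρ).trace).re ∧ r = ((Q * σ).trace).re / ε }

/-- Hypothesis testing relative entropy `D_H^ε(ρ‖σ) = -log₂ β_ε(ρ‖σ)`. -/
noncomputable def DH {ι : Type*} [Fintype ι] [DecidableEq ι]
    (ε : ℝ) (ρ σ : Matrix ι ι ℂ) : ℝ :=
  - Real.logb 2 (betaHT ε ρ σ)

/-- Partial trace over the first (A) factor. -/
noncomputable def ptraceA {α β : Type*} [Fintype α]
    (ρ : Matrix (α × β) (α × β) ℂ) : Matrix β β ℂ :=
  fun b b' => ∑ a, ρ (a, b) (a, b')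

/-- Conditional hypothesis testing entropy `H_H^ε(A|B)_ρ = -D_H^ε(ρ_AB ‖ I_A ⊗ ρ_B)`. -/
noncomputable def HH {α β : Type*} [Fintype α] [Fintype β] [DecidableEq α] [DecidableEq β]
    (ε : ℝ) (ρ : Matrix (α × β) (α × β) ℂ) : ℝ :=
  Real.logb 2 (betaHT ε ρ ((1 : Matrix α α ℂ) ⊗ₖ ptraceA ρ))

theorem sum_uncurry_single_curry {α β R : Type*} [Fintype α] [DecidableEq α] [AddCommMonoid R]
    (x : α × β → R) : ∑ a, Function.uncurry (Pi.single a (Function.curry x a)) = x := by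
  ext ⟨a, b⟩
  simp [Finset.sum_apply, Pi.single_apply, ite_apply]

namespace Matrix

variable {ι κ α β R 𝕜 : Type*} [Fintype ι] [Fintype α] [Fintype β]

theorem PosSemidef.dotProduct_mulVec_sum_le [RCLike 𝕜] {M : Matrix ι ι 𝕜} (hM : M.PosSemidef)
    (s : Finset κ) (v : κ → ι → 𝕜) :
    star (∑ i ∈ s, v i) ⬝ᵥ M *ᵥ ∑ i ∈ s, v i ≤ s.card * ∑ i ∈ s, star (v i) ⬝ᵥ M *ᵥ v i := by
  have hdefect_eq : 2 * (s.card * ∑ i ∈ s, star (v i) ⬝ᵥ M *ᵥ v i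
        - star (∑ i ∈ s, v i) ⬝ᵥ M *ᵥ ∑ i ∈ s, v i) =
      ∑ i ∈ s, ∑ j ∈ s, star (v i - v j) ⬝ᵥ M *ᵥ (v i - v j) := by
    simp only [star_sub, star_sum, mulVec_sub, mulVec_sum, sub_dotProduct, dotProduct_sub,
      sum_dotProduct, dotProduct_sum, Finset.sum_sub_distrib, Finset.sum_const, nsmul_eq_mul,
      ← Finset.mul_sum]
    rw [Finset.sum_comm (f := fun i j => star (v j) ⬝ᵥ M *ᵥ v i)]
    ring
  have hdefect : 0 ≤ ∑ i ∈ s, ∑ j ∈ s, star (v i - v j) ⬝ᵥ M *ᵥ (v i - v j) :=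
    Finset.sum_nonneg fun i _ => Finset.sum_nonneg fun j _ => hM.dotProduct_mulVec_nonneg _
  rw [← sub_nonneg, ← inv_mul_cancel_left₀ (two_ne_zero' 𝕜) (_ - _), hdefect_eq]
  exact mul_nonneg (by positivity) hdefect

theorem dotProduct_one_kronecker_mulVec [CommSemiring R] [StarRing R] [DecidableEq α]
    (B : Matrix β β R) (x : α × β → R) :
    star x ⬝ᵥ (1 ⊗ₖ B) *ᵥ x = ∑ a, star (Function.curry x a) ⬝ᵥ B *ᵥ Function.curry x a := by
  simp [dotProduct, mulVec, Fintype.sum_prod_type, one_apply, ite_mul, Finset.mul_sum]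

theorem dotProduct_submatrix_prodMk_mulVec [CommSemiring R] [StarRing R] [DecidableEq α]
    (M : Matrix (α × β) (α × β) R) (c : α) (u v : β → R) :
    star u ⬝ᵥ M.submatrix (Prod.mk c) (Prod.mk c) *ᵥ v =
      star (Function.uncurry (Pi.single c u)) ⬝ᵥ M *ᵥ Function.uncurry (Pi.single c v) := by
  simp [dotProduct, mulVec, Fintype.sum_prod_type, Pi.single_apply, ite_apply, apply_ite, ite_mul]

end Matrix

theorem ptraceA_eq_sum_submatrix {α β : Type*} [Fintype α] (ρ : Matrix (α × β) (α × β) ℂ) :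
    ptraceA ρ = ∑ a, ρ.submatrix (Prod.mk a) (Prod.mk a) := by
  ext b b'
  simp [ptraceA, Matrix.sum_apply]

theorem Matrix.PosSemidef.ptraceA {α β : Type*} [Fintype α] {ρ : Matrix (α × β) (α × β) ℂ}
    (hρ : ρ.PosSemidef) : (ptraceA ρ).PosSemidef := by
  rw [ptraceA_eq_sum_submatrix]
  exact posSemidef_sum _ fun a _ => hρ.submatrix _

theorem dotProduct_one_kronecker_ptraceA_mulVec {α β : Type*} [Fintype α] [Fintype β]
    [DecidableEq α] (ρ : Matrix (α × β) (α × β) ℂ) (x : α × β → ℂ) :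
    star x ⬝ᵥ (1 ⊗ₖ ptraceA ρ) *ᵥ x = ∑ a, ∑ c,
      star (Function.uncurry (Pi.single c (Function.curry x a))) ⬝ᵥ
        ρ *ᵥ Function.uncurry (Pi.single c (Function.curry x a)) := by
  simp only [dotProduct_one_kronecker_mulVec, ptraceA_eq_sum_submatrix, sum_mulVec,
    dotProduct_sum, dotProduct_submatrix_prodMk_mulVec]

theorem dimA_smul_id_kron_marginal_ge_general {dA dB : ℕ}
    (ρ : Matrix (Fin dA × Fin dB) (Fin dA × Fin dB) ℂ)
    (hρ : ρ.PosSemidef) :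
    ((dA : ℂ) • ((1 : Matrix (Fin dA) (Fin dA) ℂ) ⊗ₖ ptraceA ρ) - ρ).PosSemidef := by
  refine .of_dotProduct_mulVec_nonneg ?_ fun x => ?_
  · exact ((PosSemidef.one.kronecker hρ.ptraceA).1.smul (.natCast dA)).sub hρ.1
  set z : Fin dA → Fin dA → Fin dA × Fin dB → ℂ :=
    fun a c => Function.uncurry (Pi.single c (Function.curry x a))
  rw [sub_mulVec, dotProduct_sub, smul_mulVec, dotProduct_smul, smul_eq_mul, sub_nonneg]
  calc star x ⬝ᵥ ρ *ᵥ x = star (∑ a, z a a) ⬝ᵥ ρ *ᵥ ∑ a, z a a := by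
        rw [sum_uncurry_single_curry]
    _ ≤ dA * ∑ a, star (z a a) ⬝ᵥ ρ *ᵥ z a a := by
        simpa using hρ.dotProduct_mulVec_sum_le Finset.univ fun a => z a a
    _ ≤ dA * ∑ a, ∑ c, star (z a c) ⬝ᵥ ρ *ᵥ z a c := by
        gcongr with a
        exact Finset.single_le_sum (fun c _ => hρ.dotProduct_mulVec_nonneg (z a c))
          (Finset.mem_univ a)
    _ = dA * (star x ⬝ᵥ (1 ⊗ₖ ptraceA ρ) *ᵥ x) := by
        rw [dotProduct_one_kronecker_ptraceA_mulVec]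

/-- for any bipartite density operator ρ_AB,
|A|·(I_A ⊗ ρ_B) ≥ ρ_AB. -/
theorem dimA_smul_id_kron_marginal_ge {dA dB : ℕ}
    (ρ : Matrix (Fin dA × Fin dB) (Fin dA × Fin dB) ℂ)
    (hρ : ρ.PosSemidef) (hρ1 : ρ.trace = 1) :
    ((dA : ℂ) • ((1 : Matrix (Fin dA) (Fin dA) ℂ) ⊗ₖ ptraceA ρ) - ρ).PosSemidef :=
  dimA_smul_id_kron_marginal_ge_general ρ hρ
end

section
/- For a classical-quantum state ρ_XB = Σ_x p(x)|x⟩⟨x| ⊗ ρ_B^x, the conditional hypothesis testing entropy is nonnegative: H_H^ε(X|B)_ρ ≥ 0, for all 0 < ε ≤ 1. -/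
open Matrix Kronecker
open scoped ComplexOrder

/-!
For a classical-quantum state, `I_X ⊗ ρ_B - ρ_XB = ∑ₓ |x⟩⟨x| ⊗ ∑_{y ≠ x} p(y) ρ_B^y` is positive
semidefinite. As the trace of a product of positive semidefinite matrices is nonnegative, every
test `0 ≤ Q ≤ I` with `Tr(Q ρ_XB) ≥ ε` has `Tr(Q (I_X ⊗ ρ_B)) ≥ ε`, so `β_ε ≥ 1` and
`H_H^ε(X|B) = log₂ β_ε ≥ 0`.
-/

theorem Matrix.PosSemidef.trace_mul_nonneg {𝕜 n : Type*} [RCLike 𝕜] [Fintype n] [DecidableEq n]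
    {A B : Matrix n n 𝕜} (hA : A.PosSemidef) (hB : B.PosSemidef) : 0 ≤ (A * B).trace := by
  open scoped MatrixOrder Matrix.Norms.L2Operator in
  obtain ⟨C, rfl⟩ := CStarAlgebra.nonneg_iff_eq_star_mul_self.mp hB.nonneg
  rw [star_eq_conjTranspose, ← mul_assoc, trace_mul_comm, ← mul_assoc]
  exact (hA.mul_mul_conjTranspose_same C).trace_nonneg

theorem DH_nonpos_of_posSemidef_sub {ι : Type*} [Fintype ι] [DecidableEq ι] {ε : ℝ}
    (hε : 0 < ε) {ρ σ : Matrix ι ι ℂ} (hρσ : (σ - ρ).PosSemidef) : DH ε ρ σ ≤ 0 := by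
  rw [DH, neg_nonpos, betaHT]
  set S := {r : ℝ | _}
  rcases S.eq_empty_or_nonempty with hS | hS
  · -- no test reaches `Tr(Qρ) ≥ ε`: then `β_ε = sInf ∅ = 0` and `log₂ 0 = 0`
    simp [hS]
  refine Real.logb_nonneg one_lt_two (le_csInf hS ?_)
  rintro r ⟨Q, hQ, -, hQρ, rfl⟩
  have hgap : 0 ≤ (Q * (σ - ρ)).trace.re := (Complex.nonneg_iff.mp (hQ.trace_mul_nonneg hρσ)).1
  rw [mul_sub, trace_sub, Complex.sub_re, sub_nonneg] at hgap
  rw [one_le_div hε]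
  exact hQρ.trans hgap

section ClassicalQuantum

variable {α β : Type*} [Fintype α] [DecidableEq α]

theorem ptraceA_sum_single_kronecker (M : α → Matrix β β ℂ) :
    ptraceA (∑ x, single x x 1 ⊗ₖ M x) = ∑ x, M x := by
  ext b b'
  simp [ptraceA, Matrix.sum_apply, single_apply]

theorem posSemidef_one_kronecker_ptraceA_sub [Fintype β] {M : α → Matrix β β ℂ}
    (hM : ∀ x, (M x).PosSemidef) :
    ((1 : Matrix α α ℂ) ⊗ₖ ptraceA (∑ x, single x x 1 ⊗ₖ M x)
      - ∑ x, single x x 1 ⊗ₖ M x).PosSemidef := by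
  have hdiff : (1 : Matrix α α ℂ) ⊗ₖ ∑ y, M y - ∑ x, single x x 1 ⊗ₖ M x
      = ∑ x, single x x 1 ⊗ₖ ∑ y ∈ Finset.univ.erase x, M y := by
    ext ⟨a, b⟩ ⟨a', b'⟩
    simp_rw [Finset.sum_erase_eq_sub (Finset.mem_univ _)]
    by_cases h : a = a' <;> simp [Matrix.sum_apply, single_apply, one_apply, ite_and, h, mul_sub]
  rw [ptraceA_sum_single_kronecker, hdiff]
  refine posSemidef_sum _ fun x _ => PosSemidef.kronecker ?_ (posSemidef_sum _ fun y _ => hM y)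
  rw [← diagonal_single]
  exact .diagonal (Pi.single_nonneg.mpr zero_le_one)

end ClassicalQuantum

theorem HH_cq_nonneg_general {dX : ℕ} {β : Type*} [Fintype β] [DecidableEq β]
    (p : Fin dX → ℝ) (hp0 : ∀ x, 0 ≤ p x)
    (ρB : Fin dX → Matrix β β ℂ)
    (hB : ∀ x, (ρB x).PosSemidef)
    (ε : ℝ) (hε0 : 0 < ε) :
    0 ≤ HH ε (∑ x : Fin dX, (p x : ℂ) • (Matrix.single x x 1 ⊗ₖ ρB x)) := by
  have hpB : ∀ x, ((p x : ℂ) • ρB x).PosSemidef := fun x =>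
    (hB x).smul (Complex.zero_le_real.mpr (hp0 x))
  simp_rw [← kronecker_smul]
  exact neg_nonpos.mp <| DH_nonpos_of_posSemidef_sub hε0 (posSemidef_one_kronecker_ptraceA_sub hpB)

/-- for a classical-quantum state ρ_XB = ∑ₓ p(x)|x⟩⟨x| ⊗ ρ_B^x,
H_H^ε(X|B)_ρ ≥ 0. -/
theorem HH_cq_nonneg {dX : ℕ} {β : Type*} [Fintype β] [DecidableEq β]
    (p : Fin dX → ℝ) (hp0 : ∀ x, 0 ≤ p x) (hp1 : ∑ x, p x = 1)
    (ρB : Fin dX → Matrix β β ℂ)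
    (hB : ∀ x, (ρB x).PosSemidef) (hB1 : ∀ x, (ρB x).trace = 1)
    (ε : ℝ) (hε0 : 0 < ε) (hε1 : ε ≤ 1) :
    0 ≤ HH ε (∑ x : Fin dX, (p x : ℂ) • (Matrix.single x x 1 ⊗ₖ ρB x)) :=
  HH_cq_nonneg_general p hp0 ρB hB ε hε0
end

section
/- Data processing inequality for H_H^ε: if E: A → A' is a sub-unital trace-preserving completely positive map and F: B → B' is a trace-preserving completely positive map, then for τ = (E⊗F)(ρ_AB), H_H^ε(A|B)_ρ ≤ H_H^ε(A'|B')_τ. -/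
open Matrix Kronecker
open scoped ComplexOrder

/-!
A test `Q'` for `τ = (E ⊗ F)(ρ)` pulls back along the adjoint channel to the test
`Q = (E ⊗ F)†(Q')` for `ρ`: unitality of the adjoint keeps `0 ≤ Q ≤ 1`, and `Tr(Qρ) = Tr(Q'τ)`.
Its cost is `Tr(Q' (E ⊗ F)(1 ⊗ ρ_B)) = Tr(Q' (E(1) ⊗ F(ρ_B))) ≤ Tr(Q' (1 ⊗ τ_B))`, because
`E(1) ≤ 1` and, `E` being trace preserving, `τ_B = F(ρ_B)`; so
`β_ε(ρ ‖ 1 ⊗ ρ_B) ≤ β_ε(τ ‖ 1 ⊗ τ_B)`. Taking `log₂` needs `β_ε(ρ ‖ 1 ⊗ ρ_B) > 0`, which follows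
from the pinching bound `ρ ≤ |A| (1 ⊗ ρ_B)`.
-/

open scoped MatrixOrder

section PosSemidef

lemma Matrix.PosSemidef.of_nsmul {m : Type*} {k : ℕ} (hk : k ≠ 0) {D : Matrix m m ℂ}
    (h : (k • D).PosSemidef) : D.PosSemidef := by
  have := h.smul (a := (k : ℂ)⁻¹) (by positivity)
  rwa [← Nat.cast_smul_eq_nsmul ℂ, inv_smul_smul₀ (by exact_mod_cast hk)] at this

variable {m : Type*} [Fintype m]

lemma Matrix.PosSemidef.trace_mul_nonneg_s10 {Q X : Matrix m m ℂ} (hQ : Q.PosSemidef)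
    (hX : X.PosSemidef) : 0 ≤ (Q * X).trace := by
  classical
  obtain ⟨C, rfl⟩ := CStarAlgebra.nonneg_iff_eq_star_mul_self.mp hX.nonneg
  rw [Matrix.star_eq_conjTranspose, ← Matrix.mul_assoc, Matrix.trace_mul_comm,
    ← Matrix.mul_assoc]
  exact (hQ.mul_mul_conjTranspose_same C).trace_nonneg

lemma Matrix.PosSemidef.trace_mul_mono {Q X Y : Matrix m m ℂ} (hQ : Q.PosSemidef)
    (h : X ≤ Y) : (Q * X).trace ≤ (Q * Y).trace := by
  have := hQ.trace_mul_nonneg_s10 (Matrix.le_iff.mp h)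
  rwa [Matrix.mul_sub, Matrix.trace_sub, sub_nonneg] at this

lemma Matrix.kronecker_le_kronecker_right {n : Type*} [Fintype n] {A B : Matrix m m ℂ}
    {C : Matrix n n ℂ} (h : A ≤ B) (hC : C.PosSemidef) : A ⊗ₖ C ≤ B ⊗ₖ C := by
  have hsub : B ⊗ₖ C - A ⊗ₖ C = (B - A) ⊗ₖ C := by
    ext ⟨a, b⟩ ⟨a', b'⟩
    simp [sub_mul]
  rw [Matrix.le_iff, hsub]
  exact (Matrix.le_iff.mp h).kronecker hC

end PosSemidef

section Kronecker

variable {ι κ m n m' n' : Type*} [Fintype ι] [Fintype κ]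

lemma Matrix.sum_kronecker (A : ι → Matrix m n ℂ) (B : Matrix m' n' ℂ) :
    (∑ i, A i) ⊗ₖ B = ∑ i, A i ⊗ₖ B := by
  ext ⟨a, a'⟩ ⟨b, b'⟩
  simp [Matrix.sum_apply, Finset.sum_mul]

lemma Matrix.sum_kronecker_sum (A : ι → Matrix m n ℂ) (B : κ → Matrix m' n' ℂ) :
    (∑ i, A i) ⊗ₖ (∑ j, B j) = ∑ p : ι × κ, A p.1 ⊗ₖ B p.2 := by
  ext ⟨a, a'⟩ ⟨b, b'⟩
  simp [Matrix.sum_apply, Finset.sum_mul_sum, Fintype.sum_prod_type]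

end Kronecker

section Kraus

variable {ι m n : Type*} [Fintype ι] [Fintype n]

noncomputable def krausMap (K : ι → Matrix m n ℂ) (X : Matrix n n ℂ) : Matrix m m ℂ :=
  ∑ i, K i * X * (K i)ᴴ

lemma krausMap_one [DecidableEq n] (K : ι → Matrix m n ℂ) :
    krausMap K 1 = ∑ i, K i * (K i)ᴴ := by
  simp [krausMap]

lemma krausMap_sub (K : ι → Matrix m n ℂ) (X Y : Matrix n n ℂ) :
    krausMap K (X - Y) = krausMap K X - krausMap K Y := by
  simp only [krausMap, Matrix.mul_sub, Matrix.sub_mul, Finset.sum_sub_distrib]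

variable [Fintype m]

lemma krausMap_posSemidef (K : ι → Matrix m n ℂ) {X : Matrix n n ℂ} (hX : X.PosSemidef) :
    (krausMap K X).PosSemidef :=
  Matrix.nonneg_iff_posSemidef.mp <| Finset.sum_nonneg fun i _ =>
    (hX.mul_mul_conjTranspose_same (K i)).nonneg

lemma trace_mul_krausMap (K : ι → Matrix m n ℂ) (Y : Matrix m m ℂ) (X : Matrix n n ℂ) :
    (Y * krausMap K X).trace = (krausMap (fun i => (K i)ᴴ) Y * X).trace := by
  simp only [krausMap, Matrix.mul_sum, Finset.sum_mul, Matrix.trace_sum,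
    Matrix.conjTranspose_conjTranspose]
  refine Finset.sum_congr rfl fun i _ => ?_
  rw [Matrix.trace_mul_comm, Matrix.mul_assoc, Matrix.mul_assoc, Matrix.trace_mul_comm,
    Matrix.mul_assoc]
  exact Matrix.trace_mul_comm _ _

lemma trace_krausMap [DecidableEq m] [DecidableEq n] {K : ι → Matrix m n ℂ}
    (hK : ∑ i, (K i)ᴴ * K i = 1) (X : Matrix n n ℂ) : (krausMap K X).trace = X.trace := by
  simpa [krausMap_one, hK] using trace_mul_krausMap K 1 X

omit [Fintype n] in
lemma one_sub_krausMap_conjTranspose [DecidableEq m] [DecidableEq n] {K : ι → Matrix m n ℂ}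
    (hK : ∑ i, (K i)ᴴ * K i = 1) (Q : Matrix m m ℂ) :
    1 - krausMap (fun i => (K i)ᴴ) Q = krausMap (fun i => (K i)ᴴ) (1 - Q) := by
  simp [krausMap_sub, krausMap_one, hK]

lemma krausMap_comp_le {ι' : Type*} [Fintype ι'] (K : ι → Matrix m n ℂ) {f : ι' → ι}
    (hf : f.Injective) {X : Matrix n n ℂ} (hX : X.PosSemidef) :
    krausMap (K ∘ f) X ≤ krausMap K X := by
  classical
  calc krausMap (K ∘ f) X = ∑ i ∈ Finset.univ.image f, K i * X * (K i)ᴴ :=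
        (Finset.sum_image (f := fun i => K i * X * (K i)ᴴ) fun _ _ _ _ h => hf h).symm
    _ ≤ krausMap K X := Finset.sum_le_sum_of_subset_of_nonneg (Finset.subset_univ _)
          fun i _ _ => (hX.mul_mul_conjTranspose_same (K i)).nonneg

lemma sum_mul_mul_conjTranspose_sum_le (K : ι → Matrix m n ℂ) {X : Matrix n n ℂ}
    (hX : X.PosSemidef) :
    (∑ i, K i) * X * (∑ i, K i)ᴴ ≤ Fintype.card ι • krausMap K X := by
  set S := ∑ i, K i
  have key : Fintype.card ι • (Fintype.card ι • krausMap K X - S * X * Sᴴ) =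
      krausMap (fun i => Fintype.card ι • K i - S) X := by
    simp only [krausMap, Matrix.conjTranspose_sub, Matrix.conjTranspose_nsmul, Matrix.sub_mul,
      Matrix.mul_sub, Matrix.smul_mul, Matrix.mul_smul, Finset.sum_sub_distrib, ← Finset.smul_sum,
      ← Matrix.mul_sum, ← Matrix.sum_mul, ← Matrix.conjTranspose_sum, Finset.sum_const,
      Finset.card_univ]
    abel
  rcases isEmpty_or_nonempty ι with hι | hι
  · simp [S]
  · rw [Matrix.le_iff]
    refine Matrix.PosSemidef.of_nsmul (Fintype.card_ne_zero (α := ι)) ?_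
    rw [key]
    exact krausMap_posSemidef _ hX

end Kraus

section KrausKronecker

variable {ι κ m n m' n' : Type*} [Fintype ι] [Fintype κ]

def krausKronecker (K : ι → Matrix m n ℂ) (L : κ → Matrix m' n' ℂ) :
    ι × κ → Matrix (m × m') (n × n') ℂ :=
  fun p => K p.1 ⊗ₖ L p.2

omit [Fintype ι] [Fintype κ] in
lemma conjTranspose_krausKronecker (K : ι → Matrix m n ℂ) (L : κ → Matrix m' n' ℂ) :
    (fun p => (krausKronecker K L p)ᴴ) =
      krausKronecker (fun i => (K i)ᴴ) (fun j => (L j)ᴴ) :=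
  funext fun _ => Matrix.conjTranspose_kronecker _ _

lemma krausMap_krausKronecker_kronecker [Fintype n] [Fintype n'] (K : ι → Matrix m n ℂ)
    (L : κ → Matrix m' n' ℂ) (X : Matrix n n ℂ) (Y : Matrix n' n' ℂ) :
    krausMap (krausKronecker K L) (X ⊗ₖ Y) = krausMap K X ⊗ₖ krausMap L Y := by
  simp only [krausMap, krausKronecker, Matrix.sum_kronecker_sum, Matrix.conjTranspose_kronecker,
    Matrix.mul_kronecker_mul]

lemma sum_conjTranspose_mul_krausKronecker [Fintype m] [Fintype m'] [DecidableEq n]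
    [DecidableEq n'] {K : ι → Matrix m n ℂ} {L : κ → Matrix m' n' ℂ}
    (hK : ∑ i, (K i)ᴴ * K i = 1) (hL : ∑ j, (L j)ᴴ * L j = 1) :
    ∑ p, (krausKronecker K L p)ᴴ * krausKronecker K L p = 1 :=
  calc ∑ p, (krausKronecker K L p)ᴴ * krausKronecker K L p
      = (∑ i, (K i)ᴴ * K i) ⊗ₖ (∑ j, (L j)ᴴ * L j) := by
        simp only [Matrix.sum_kronecker_sum, krausKronecker, Matrix.conjTranspose_kronecker,
          Matrix.mul_kronecker_mul]
    _ = 1 := by rw [hK, hL, Matrix.one_kronecker_one]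

end KrausKronecker

section PartialTrace

variable {m n : Type*} [Fintype m]

lemma ptraceA_eq_sum_submatrix_s10 (X : Matrix (m × n) (m × n) ℂ) :
    ptraceA X = ∑ a, X.submatrix (Prod.mk a) (Prod.mk a) := by
  ext b b'
  simp [ptraceA, Matrix.sum_apply]

lemma ptraceA_posSemidef {X : Matrix (m × n) (m × n) ℂ} (hX : X.PosSemidef) :
    (ptraceA X).PosSemidef := by
  rw [ptraceA_eq_sum_submatrix_s10]
  exact Matrix.nonneg_iff_posSemidef.mp <| Finset.sum_nonneg fun a _ => (hX.submatrix _).nonneg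

variable [Fintype n]

variable [DecidableEq m]

lemma trace_mul_ptraceA (Z : Matrix n n ℂ) (X : Matrix (m × n) (m × n) ℂ) :
    (Z * ptraceA X).trace = ((1 ⊗ₖ Z) * X).trace := by
  simp only [Matrix.trace, Matrix.diag_apply, Matrix.mul_apply, ptraceA, Finset.mul_sum,
    Matrix.kroneckerMap_apply, Matrix.one_apply, ite_mul, one_mul, zero_mul,
    Fintype.sum_prod_type, Finset.sum_ite_irrel, Finset.sum_const_zero, Finset.sum_ite_eq,
    Finset.mem_univ, ↓reduceIte]
  rw [Finset.sum_comm (s := (Finset.univ : Finset m))]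
  exact Finset.sum_congr rfl fun _ _ => Finset.sum_comm

lemma ptraceA_krausMap_krausKronecker {ι κ m' n' : Type*} [Fintype ι] [Fintype κ]
    [Fintype m'] [Fintype n'] [DecidableEq m'] {K : ι → Matrix m' m ℂ}
    (hK : ∑ i, (K i)ᴴ * K i = 1) (L : κ → Matrix n' n ℂ) (X : Matrix (m × n) (m × n) ℂ) :
    ptraceA (krausMap (krausKronecker K L) X) = krausMap L (ptraceA X) := by
  refine Matrix.ext_iff_trace_mul_left.mpr fun Z => ?_
  rw [trace_mul_ptraceA, trace_mul_krausMap, conjTranspose_krausKronecker,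
    krausMap_krausKronecker_kronecker, krausMap_one]
  simp only [Matrix.conjTranspose_conjTranspose, hK]
  rw [← trace_mul_ptraceA, trace_mul_krausMap]

variable [DecidableEq n]

lemma one_kronecker_ptraceA_eq_krausMap (X : Matrix (m × n) (m × n) ℂ) :
    1 ⊗ₖ ptraceA X =
      krausMap (fun p : m × m => Matrix.single p.1 p.2 (1 : ℂ) ⊗ₖ (1 : Matrix n n ℂ)) X := by
  ext ⟨x, b⟩ ⟨x', b'⟩
  simp [krausMap, ptraceA, Matrix.sum_apply, Matrix.mul_apply, Matrix.single_apply,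
    Matrix.one_apply, Fintype.sum_prod_type, ite_and, apply_ite (starRingEnd ℂ), eq_comm]

lemma le_card_nsmul_one_kronecker_ptraceA {X : Matrix (m × n) (m × n) ℂ} (hX : X.PosSemidef) :
    X ≤ Fintype.card m • (1 ⊗ₖ ptraceA X) := by
  set W := fun p : m × m => Matrix.single p.1 p.2 (1 : ℂ) ⊗ₖ (1 : Matrix n n ℂ)
  have hdiag : ∑ a, W (a, a) = 1 := by
    rw [← Matrix.sum_kronecker, Matrix.sum_single_one, Matrix.one_kronecker_one]
  calc X = (∑ a, W (a, a)) * X * (∑ a, W (a, a))ᴴ := by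
        rw [hdiag, Matrix.conjTranspose_one, Matrix.mul_one, Matrix.one_mul]
    _ ≤ Fintype.card m • krausMap (W ∘ fun a => (a, a)) X :=
        sum_mul_mul_conjTranspose_sum_le _ hX
    _ ≤ Fintype.card m • krausMap W X :=
        nsmul_le_nsmul_right (krausMap_comp_le W (fun _ _ h => congrArg Prod.fst h) hX) _
    _ = Fintype.card m • (1 ⊗ₖ ptraceA X) := by rw [one_kronecker_ptraceA_eq_krausMap]

end PartialTrace

section HypothesisTesting

variable {m : Type*} [Fintype m] [DecidableEq m] {ε : ℝ}

lemma betaHT_le (hε : 0 < ε) {ρ σ Q : Matrix m m ℂ} (hσ : σ.PosSemidef) (hQ : Q.PosSemidef)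
    (hQ1 : (1 - Q).PosSemidef) (hQρ : ε ≤ (Q * ρ).trace.re) :
    betaHT ε ρ σ ≤ (Q * σ).trace.re / ε := by
  refine csInf_le ⟨0, ?_⟩ ⟨Q, hQ, hQ1, hQρ, rfl⟩
  rintro _ ⟨Q', hQ', -, -, rfl⟩
  exact div_nonneg (Complex.nonneg_iff.mp (hQ'.trace_mul_nonneg_s10 hσ)).1 hε.le

lemma le_betaHT {c : ℝ} {ρ σ : Matrix m m ℂ} (hρ : ε ≤ ρ.trace.re)
    (h : ∀ Q : Matrix m m ℂ, Q.PosSemidef → (1 - Q).PosSemidef → ε ≤ (Q * ρ).trace.re →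
      c ≤ (Q * σ).trace.re / ε) :
    c ≤ betaHT ε ρ σ := by
  refine le_csInf ⟨_, 1, .one, by simpa using .zero, by simpa using hρ, rfl⟩ ?_
  rintro _ ⟨Q, hQ, hQ1, hQρ, rfl⟩
  exact h Q hQ hQ1 hQρ

theorem betaHT_le_betaHT_krausMap {ι m' : Type*} [Fintype ι] [Fintype m'] [DecidableEq m']
    {K : ι → Matrix m' m ℂ} (hK : ∑ i, (K i)ᴴ * K i = 1) (hε : 0 < ε) {ρ σ : Matrix m m ℂ}
    {σ' : Matrix m' m' ℂ} (hρ : ε ≤ ρ.trace.re) (hσ : σ.PosSemidef)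
    (hσσ' : krausMap K σ ≤ σ') :
    betaHT ε ρ σ ≤ betaHT ε (krausMap K ρ) σ' := by
  refine le_betaHT (by rwa [trace_krausMap hK]) fun Q hQ hQ1 hQρ => ?_
  calc betaHT ε ρ σ ≤ (krausMap (fun i => (K i)ᴴ) Q * σ).trace.re / ε := by
        refine betaHT_le hε hσ (krausMap_posSemidef _ hQ) ?_ (by rwa [← trace_mul_krausMap])
        rw [one_sub_krausMap_conjTranspose hK]
        exact krausMap_posSemidef _ hQ1
    _ = (Q * krausMap K σ).trace.re / ε := by rw [trace_mul_krausMap]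
    _ ≤ (Q * σ').trace.re / ε := by
        gcongr
        exact hQ.trace_mul_mono hσσ'

lemma betaHT_one_kronecker_ptraceA_pos {n : Type*} [Fintype n] [DecidableEq n] (hε : 0 < ε)
    {ρ : Matrix (m × n) (m × n) ℂ} (hρ : ρ.PosSemidef) (hρε : ε ≤ ρ.trace.re) :
    0 < betaHT ε ρ (1 ⊗ₖ ptraceA ρ) := by
  have : Nonempty m := by
    by_contra h
    rw [not_nonempty_iff] at h
    simp only [Matrix.trace, Finset.univ_eq_empty, Finset.sum_empty, Complex.zero_re] at hρε
    linarith
  have hcard : (0 : ℝ) < Fintype.card m := by exact_mod_cast Fintype.card_pos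
  refine lt_of_lt_of_le (inv_pos.mpr hcard) (le_betaHT hρε fun Q hQ _ hQρ => ?_)
  have h := (Complex.le_def.mp (hQ.trace_mul_mono (le_card_nsmul_one_kronecker_ptraceA hρ))).1
  rw [Matrix.mul_smul, Matrix.trace_smul, nsmul_eq_mul] at h
  simp only [Complex.mul_re, Complex.natCast_re, Complex.natCast_im, zero_mul, sub_zero] at h
  rw [le_div_iff₀ hε, inv_mul_le_iff₀ hcard]
  linarith

end HypothesisTesting

/-- data processing inequality for H_H^ε: if E : A → A' is a sub-unital
trace-preserving CP map (Kraus operators K) and F : B → B' is a trace-preserving CP map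
(Kraus operators L), then H_H^ε(A|B)_ρ ≤ H_H^ε(A'|B')_τ for τ = (E⊗F)(ρ). -/
theorem HH_data_processing {αA αA' αB αB' : Type*}
    [Fintype αA] [Fintype αA'] [Fintype αB] [Fintype αB']
    [DecidableEq αA] [DecidableEq αA'] [DecidableEq αB] [DecidableEq αB']
    {rA rB : ℕ}
    (ρ : Matrix (αA × αB) (αA × αB) ℂ) (hρ : ρ.PosSemidef) (hρ1 : ρ.trace = 1)
    (K : Fin rA → Matrix αA' αA ℂ) (L : Fin rB → Matrix αB' αB ℂ)
    (hKTP : ∑ i, (K i)ᴴ * K i = 1)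
    (hKsub : ((1 : Matrix αA' αA' ℂ) - ∑ i, K i * (K i)ᴴ).PosSemidef)
    (hLTP : ∑ j, (L j)ᴴ * L j = 1)
    (ε : ℝ) (hε0 : 0 < ε) (hε1 : ε ≤ 1) :
    HH ε ρ ≤ HH ε (∑ i : Fin rA, ∑ j : Fin rB,
      (K i ⊗ₖ L j) * ρ * (K i ⊗ₖ L j)ᴴ) := by
  have hτ : ∑ i : Fin rA, ∑ j : Fin rB, (K i ⊗ₖ L j) * ρ * (K i ⊗ₖ L j)ᴴ =
      krausMap (krausKronecker K L) ρ := by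
    rw [krausMap, Fintype.sum_prod_type]; rfl
  have hρε : ε ≤ ρ.trace.re := by simpa [hρ1] using hε1
  have hσ : krausMap (krausKronecker K L) (1 ⊗ₖ ptraceA ρ) ≤ 1 ⊗ₖ krausMap L (ptraceA ρ) := by
    rw [krausMap_krausKronecker_kronecker, krausMap_one]
    exact Matrix.kronecker_le_kronecker_right (Matrix.le_iff.mpr hKsub)
      (krausMap_posSemidef L (ptraceA_posSemidef hρ))
  rw [HH, HH, hτ, ptraceA_krausMap_krausKronecker hKTP]
  exact Real.logb_le_logb_of_le one_lt_two (betaHT_one_kronecker_ptraceA_pos hε0 hρ hρε)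
    (betaHT_le_betaHT_krausMap (sum_conjTranspose_mul_krausKronecker hKTP hLTP) hε0 hρε
      (Matrix.PosSemidef.one.kronecker (ptraceA_posSemidef hρ)) hσ)
end
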